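/- Let S be a set of Hermitian polynomials in ℂ[x,x̄] such that R − ∑_{i=1}^n x_i x̄_i ∈ 𝓜(S)_2 for some real R > 0. For each t ∈ ℕ let L_t : ℂ[x,x̄]_{2t} → ℂ be a linear functional that is nonnegative on 𝓜(S)_{2t}. Then: (1) for every monomial w in the variables x, x̄ of degree at most 2t one has |L_t(w)| ≤ R^{deg(w)/2} · L_t(1); (2) if sup_{t∈ℕ} L_t(1) < ∞, then there exist a linear functional L : ℂ[x,x̄] → ℂ and a strictly increasing map φ : ℕ → ℕ such that for every polynomial p ∈ ℂ[x,x̄], L_{φ(k)}(p) → L(p) as k → ∞ (where L_{φ(k)}(p) is defined for all k with 2φ(k) ≥ deg(p)). -/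

import Mathlib

/-!
Positivity of `L_t` on `𝓜(S)_{2t}` makes `⟪p, q⟫ = L_t (q p̄)` a positive semidefinite Hermitian
form on polynomials of degree at most `t`, so Cauchy–Schwarz applies to it. Multiplying the
certificate `R - ∑ x_i x̄_i` by a Hermitian square `p p̄` gives
`L_t (x_j p · conj (x_j p)) ≤ R L_t (p p̄)`, hence `L_t (m m̄) ≤ R^{deg m} L_t 1` for monomials `m`
of degree at most `t`. A monomial of degree at most `2t` is a product `u v` of two such monomials,
and Cauchy–Schwarz for `u` and `v̄` gives (1). Under `sup_t L_t 1 < ∞`, (1) bounds every moment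
`L_t (w)` once `2t ≥ deg w`, so Tychonoff's theorem on the countable product of discs indexed by
monomials yields a subsequence converging on the monomial basis, hence on every polynomial.
-/

open MvPolynomial ComplexOrder

/-- The conjugate polynomial: conjugate all coefficients and exchange each
variable `x_i` (encoded `Sum.inl i`) with `x̄_i` (encoded `Sum.inr i`). -/
noncomputable def cconj {n : ℕ} (p : MvPolynomial (Fin n ⊕ Fin n) ℂ) :
    MvPolynomial (Fin n ⊕ Fin n) ℂ :=
  rename (Sum.elim Sum.inr Sum.inl) (map (starRingEnd ℂ) p)

/-- The truncated quadratic module `𝓜(S)_{2t}`: nonnegative combinations of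
products `g·p·p̄` with `g ∈ S ∪ {1}` and `deg(g p p̄) ≤ 2t`. -/
def QMt {n : ℕ} (S : Set (MvPolynomial (Fin n ⊕ Fin n) ℂ)) (t : ℕ) :
    Set (MvPolynomial (Fin n ⊕ Fin n) ℂ) :=
  { q | ∃ (N : ℕ) (c : Fin N → ℝ) (g p : Fin N → MvPolynomial (Fin n ⊕ Fin n) ℂ),
      (∀ s, 0 ≤ c s) ∧ (∀ s, g s ∈ S ∪ {1}) ∧
      (∀ s, (g s * (p s * cconj (p s))).totalDegree ≤ 2 * t) ∧
      q = ∑ s, C (c s : ℂ) * (g s * (p s * cconj (p s))) }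

open Filter Topology
open Finsupp (degree)

lemma Finsupp.exists_add_eq_degree_le {σ : Type*} (w : σ →₀ ℕ) {s r : ℕ}
    (h : degree w ≤ s + r) : ∃ u v : σ →₀ ℕ, u + v = w ∧ degree u ≤ s ∧ degree v ≤ r := by
  induction w using Finsupp.induction_linear generalizing s r with
  | zero => exact ⟨0, 0, by simp⟩
  | add f g hf hg =>
    rw [map_add] at h
    obtain ⟨u₁, v₁, huv₁, hu₁, hv₁⟩ := hf (s := min s (degree f)) (r := degree f - min s (degree f))
      (by omega)
    obtain ⟨u₂, v₂, huv₂, hu₂, hv₂⟩ := hg (s := s - min s (degree f))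
      (r := r - (degree f - min s (degree f))) (by omega)
    refine ⟨u₁ + u₂, v₁ + v₂, by rw [← huv₁, ← huv₂]; abel, ?_, ?_⟩ <;> rw [map_add] <;> omega
  | single a b =>
    rw [Finsupp.degree_single] at h
    refine ⟨single a (min b s), single a (b - min b s), ?_, by rw [Finsupp.degree_single]; omega,
      by rw [Finsupp.degree_single]; omega⟩
    rw [← Finsupp.single_add]
    congr 1
    omega

theorem Module.Basis.tendsto_apply_of_tendsto_apply_basis {ι R M N : Type*} [CommSemiring R]
    [AddCommMonoid M] [Module R M] [AddCommMonoid N] [Module R N] [TopologicalSpace N]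
    [ContinuousAdd N] [ContinuousConstSMul R N]
    (b : Module.Basis ι R M) {α : Type*} {l : Filter α} {f : α → M →ₗ[R] N} {g : M →ₗ[R] N}
    (h : ∀ i, Tendsto (fun a => f a (b i)) l (𝓝 (g (b i)))) (x : M) :
    Tendsto (fun a => f a x) l (𝓝 (g x)) := by
  rw [← b.linearCombination_repr x]
  simp only [Finsupp.linearCombination_apply, Finsupp.sum, map_sum, map_smul]
  exact tendsto_finsetSum _ fun i _ => (h i).const_smul _

theorem exists_linearMap_subseq_tendsto {𝕜 ι M : Type*} [RCLike 𝕜] [Countable ι] [AddCommGroup M]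
    [Module 𝕜 M] (b : Module.Basis ι 𝕜 M) (f : ℕ → M →ₗ[𝕜] 𝕜) (B : ι → ℝ)
    (hB : ∀ i, ∀ᶠ t in atTop, ‖f t (b i)‖ ≤ B i) :
    ∃ (g : M →ₗ[𝕜] 𝕜) (φ : ℕ → ℕ), StrictMono φ ∧
      ∀ x, Tendsto (fun k => f (φ k) x) atTop (𝓝 (g x)) := by
  classical
  let y : ℕ → ι → 𝕜 := fun t i => if ‖f t (b i)‖ ≤ B i then f t (b i) else 0
  have hy : ∀ t, y t ∈ Set.univ.pi fun i => Metric.closedBall (0 : 𝕜) (B i) := by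
    intro t i _
    obtain ⟨s, hs⟩ := (hB i).exists
    rw [mem_closedBall_zero_iff]
    dsimp only [y]
    split_ifs with h
    · exact h
    · simpa using (norm_nonneg _).trans hs
  obtain ⟨a, -, φ, hφ, hlim⟩ :=
    (isCompact_univ_pi fun i => isCompact_closedBall (0 : 𝕜) (B i)).tendsto_subseq hy
  refine ⟨b.constr 𝕜 a, φ, hφ, b.tendsto_apply_of_tendsto_apply_basis fun i => ?_⟩
  rw [b.constr_basis]
  refine (tendsto_pi_nhds.mp hlim i).congr' ?_
  filter_upwards [hφ.tendsto_atTop.eventually (hB i)] with k hk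
  simp [y, hk]

section Conjugation
variable {n : ℕ}

@[simp]
lemma cconj_one : cconj (1 : MvPolynomial (Fin n ⊕ Fin n) ℂ) = 1 := by
  simp [cconj]

@[simp]
lemma cconj_add (p q : MvPolynomial (Fin n ⊕ Fin n) ℂ) : cconj (p + q) = cconj p + cconj q := by
  simp [cconj]

@[simp]
lemma cconj_mul (p q : MvPolynomial (Fin n ⊕ Fin n) ℂ) : cconj (p * q) = cconj p * cconj q := by
  simp [cconj]

@[simp]
lemma cconj_smul (c : ℂ) (p : MvPolynomial (Fin n ⊕ Fin n) ℂ) :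
    cconj (c • p) = starRingEnd ℂ c • cconj p := by
  simp [cconj, smul_eq_C_mul]

@[simp]
lemma cconj_X (j : Fin n ⊕ Fin n) :
    cconj (X j : MvPolynomial (Fin n ⊕ Fin n) ℂ) = X (Sum.elim Sum.inr Sum.inl j) := by
  simp [cconj]

@[simp]
lemma cconj_cconj (p : MvPolynomial (Fin n ⊕ Fin n) ℂ) : cconj (cconj p) = p := by
  have hswap : (Sum.elim Sum.inr Sum.inl : Fin n ⊕ Fin n → Fin n ⊕ Fin n) ∘
      Sum.elim Sum.inr Sum.inl = id := by
    funext j; cases j <;> rfl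
  simp [cconj, map_rename, rename_rename, hswap, MvPolynomial.map_map, MvPolynomial.map_id]

lemma totalDegree_cconj_le (p : MvPolynomial (Fin n ⊕ Fin n) ℂ) :
    (cconj p).totalDegree ≤ p.totalDegree :=
  (totalDegree_rename_le _ _).trans (Finset.sup_mono (support_map_subset _ _))

@[simp]
lemma totalDegree_cconj (p : MvPolynomial (Fin n ⊕ Fin n) ℂ) :
    (cconj p).totalDegree = p.totalDegree :=
  le_antisymm (totalDegree_cconj_le p) (by simpa using totalDegree_cconj_le (cconj p))

end Conjugation

section QuadraticModule
variable {n : ℕ} {S : Set (MvPolynomial (Fin n ⊕ Fin n) ℂ)} {s t : ℕ}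
  {p : MvPolynomial (Fin n ⊕ Fin n) ℂ}

lemma mul_cconj_mem_QMt (hp : p.totalDegree ≤ t) : p * cconj p ∈ QMt S t := by
  refine ⟨1, fun _ => 1, fun _ => 1, fun _ => p, fun _ => zero_le_one, fun _ => Or.inr rfl,
    fun _ => ?_, by simp⟩
  dsimp only
  grw [one_mul, totalDegree_mul, totalDegree_cconj]
  omega

lemma mul_mul_cconj_mem_QMt {g : MvPolynomial (Fin n ⊕ Fin n) ℂ} (hg : g ∈ QMt S s)
    (hp : p.totalDegree + s ≤ t) : g * (p * cconj p) ∈ QMt S t := by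
  obtain ⟨N, c, g, q, hc, hgS, hdeg, rfl⟩ := hg
  have hmul : ∀ i, g i * (q i * p * cconj (q i * p)) = g i * (q i * cconj (q i)) * (p * cconj p) :=
    fun i => by rw [cconj_mul]; ring
  refine ⟨N, c, g, fun i => q i * p, hc, hgS, fun i => ?_, ?_⟩
  · grw [hmul, totalDegree_mul, hdeg, totalDegree_mul, totalDegree_cconj]
    omega
  · rw [Finset.sum_mul]
    exact Finset.sum_congr rfl fun i _ => by rw [hmul, mul_assoc]

end QuadraticModule

section PositiveFunctional
variable {n : ℕ} {S : Set (MvPolynomial (Fin n ⊕ Fin n) ℂ)} {t : ℕ}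
  {L : MvPolynomial (Fin n ⊕ Fin n) ℂ →ₗ[ℂ] ℂ} (hL : ∀ q ∈ QMt S t, 0 ≤ L q)
  {p q : MvPolynomial (Fin n ⊕ Fin n) ℂ}
include hL

lemma map_mul_cconj_nonneg (hp : p.totalDegree ≤ t) : 0 ≤ L (p * cconj p) :=
  hL _ (mul_cconj_mem_QMt hp)

lemma re_map_mul_cconj_nonneg (hp : p.totalDegree ≤ t) : 0 ≤ (L (p * cconj p)).re :=
  (Complex.nonneg_iff.mp (map_mul_cconj_nonneg hL hp)).1

lemma conj_map_mul_cconj (hp : p.totalDegree ≤ t) (hq : q.totalDegree ≤ t) :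
    starRingEnd ℂ (L (p * cconj q)) = L (q * cconj p) := by
  have hdeg : ∀ c : ℂ, (p + c • q).totalDegree ≤ t := fun c =>
    (totalDegree_add _ _).trans (max_le hp ((totalDegree_smul_le _ _).trans hq))
  -- `L` is real on Hermitian squares; polarize with `p + q` and `p + I • q`.
  have hexpand : ∀ c : ℂ, L ((p + c • q) * cconj (p + c • q)) = L (p * cconj p)
      + (starRingEnd ℂ c * L (p * cconj q) + c * L (q * cconj p))
      + (Complex.normSq c : ℂ) * L (q * cconj q) := fun c => by
    simp only [cconj_add, cconj_smul, add_mul, mul_add, smul_mul_assoc, mul_smul_comm,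
      map_add, map_smul, smul_eq_mul, ← Complex.mul_conj]
    ring
  have him : ∀ c : ℂ, (starRingEnd ℂ c * L (p * cconj q) + c * L (q * cconj p)).im = 0 := by
    intro c
    have h := (Complex.nonneg_iff.mp (map_mul_cconj_nonneg hL (hdeg c))).2
    rw [hexpand, Complex.add_im, Complex.add_im, Complex.im_ofReal_mul,
      ← (Complex.nonneg_iff.mp (map_mul_cconj_nonneg hL hp)).2,
      ← (Complex.nonneg_iff.mp (map_mul_cconj_nonneg hL hq)).2] at h
    linarith
  have h1 := him 1
  have hI := him Complex.I
  simp only [map_one, one_mul, Complex.conj_I, Complex.add_im, Complex.mul_im, Complex.neg_re,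
    Complex.neg_im, Complex.I_re, Complex.I_im] at h1 hI
  apply Complex.ext <;> simp only [Complex.conj_re, Complex.conj_im] <;> linarith

noncomputable abbrev preInnerProductCoreOfNonneg :
    PreInnerProductSpace.Core ℂ (restrictTotalDegree (Fin n ⊕ Fin n) ℂ t) where
  inner p q := L ((q : MvPolynomial (Fin n ⊕ Fin n) ℂ) * cconj p)
  conj_inner_symm p q := by
    exact conj_map_mul_cconj hL ((mem_restrictTotalDegree _ _ _).mp p.2)
      ((mem_restrictTotalDegree _ _ _).mp q.2)
  re_inner_nonneg p := by
    rw [RCLike.re_to_complex]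
    exact re_map_mul_cconj_nonneg hL ((mem_restrictTotalDegree _ _ _).mp p.2)
  add_left p q r := by simp [mul_add]
  smul_left p q c := by simp

lemma norm_map_mul_cconj_sq_le (hp : p.totalDegree ≤ t) (hq : q.totalDegree ≤ t) :
    ‖L (p * cconj q)‖ ^ 2 ≤ (L (p * cconj p)).re * (L (q * cconj q)).re := by
  have h := InnerProductSpace.Core.inner_mul_inner_self_le (c := preInnerProductCoreOfNonneg hL)
    (⟨q, (mem_restrictTotalDegree _ _ _).mpr hq⟩ : restrictTotalDegree (Fin n ⊕ Fin n) ℂ t)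
    ⟨p, (mem_restrictTotalDegree _ _ _).mpr hp⟩
  change ‖L (p * cconj q)‖ * ‖L (q * cconj p)‖ ≤ (L (q * cconj q)).re * (L (p * cconj p)).re at h
  rwa [← conj_map_mul_cconj hL hp hq, Complex.norm_conj, ← sq, mul_comm (L (q * cconj q)).re] at h

end PositiveFunctional

lemma totalDegree_monomial_one {n : ℕ} (m : (Fin n ⊕ Fin n) →₀ ℕ) :
    (monomial m (1 : ℂ)).totalDegree = degree m :=
  totalDegree_monomial m one_ne_zero

section Archimedean
variable {n : ℕ} {S : Set (MvPolynomial (Fin n ⊕ Fin n) ℂ)} {t : ℕ} {R : ℝ}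
  {L : MvPolynomial (Fin n ⊕ Fin n) ℂ →ₗ[ℂ] ℂ} (hL : ∀ q ∈ QMt S t, 0 ≤ L q)
  (hArch : (C (R : ℂ) - ∑ i : Fin n, X (Sum.inl i) * X (Sum.inr i)) ∈ QMt S 1)
include hL hArch

lemma map_X_mul_mul_cconj_le {p : MvPolynomial (Fin n ⊕ Fin n) ℂ} (hp : p.totalDegree + 1 ≤ t)
    (j : Fin n ⊕ Fin n) : L (X j * p * cconj (X j * p)) ≤ R * L (p * cconj p) := by
  have hdeg : ∀ k, (X k * p).totalDegree ≤ t := fun k => by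
    grw [totalDegree_mul, totalDegree_X]
    omega
  set a : Fin n → ℂ := fun i => L (X (Sum.inl i) * p * cconj (X (Sum.inl i) * p))
  have hsum : L ((C (R : ℂ) - ∑ i : Fin n, X (Sum.inl i) * X (Sum.inr i)) * (p * cconj p)) =
      R * L (p * cconj p) - ∑ i, a i := by
    simp [a, sub_mul, Finset.sum_mul, ← smul_eq_C_mul, mul_mul_mul_comm]
  -- The square of `x̄_i p` equals that of `x_i p`.
  have ha : a (j.elim id id) = L (X j * p * cconj (X j * p)) := by
    cases j <;> simp [a, mul_mul_mul_comm, mul_comm]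
  calc L (X j * p * cconj (X j * p)) = a (j.elim id id) := ha.symm
    _ ≤ ∑ i, a i := Finset.single_le_sum (fun i _ => map_mul_cconj_nonneg hL (hdeg _))
        (Finset.mem_univ _)
    _ ≤ R * L (p * cconj p) := by
      rw [← sub_nonneg, ← hsum]
      exact hL _ (mul_mul_cconj_mem_QMt hArch hp)

lemma map_X_pow_mul_mul_cconj_le (hR : 0 ≤ R) (j : Fin n ⊕ Fin n) :
    ∀ (b : ℕ) {p : MvPolynomial (Fin n ⊕ Fin n) ℂ}, p.totalDegree + b ≤ t →
      L (X j ^ b * p * cconj (X j ^ b * p)) ≤ (R : ℂ) ^ b * L (p * cconj p)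
  | 0, p, _ => by simp
  | b + 1, p, hp => by
    have hdeg : (X j ^ b * p).totalDegree + 1 ≤ t := by
      grw [totalDegree_mul, totalDegree_X_pow]
      omega
    calc L (X j ^ (b + 1) * p * cconj (X j ^ (b + 1) * p))
        = L (X j * (X j ^ b * p) * cconj (X j * (X j ^ b * p))) := by
          rw [pow_succ', mul_assoc (X j)]
      _ ≤ R * L (X j ^ b * p * cconj (X j ^ b * p)) := map_X_mul_mul_cconj_le hL hArch hdeg j
      _ ≤ R * ((R : ℂ) ^ b * L (p * cconj p)) := by
        gcongr
        exact map_X_pow_mul_mul_cconj_le hR j b (by omega)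
      _ = (R : ℂ) ^ (b + 1) * L (p * cconj p) := by ring

lemma map_monomial_mul_cconj_le (hR : 0 ≤ R) (m : (Fin n ⊕ Fin n) →₀ ℕ) (hm : degree m ≤ t) :
    L (monomial m 1 * cconj (monomial m 1)) ≤ (R : ℂ) ^ degree m * L 1 := by
  induction m using Finsupp.induction with
  | zero => simp
  | single_add a b f _ _ ih =>
    rw [map_add, Finsupp.degree_single] at hm ⊢
    rw [monomial_single_add]
    calc L (X a ^ b * monomial f 1 * cconj (X a ^ b * monomial f 1))
        ≤ (R : ℂ) ^ b * L (monomial f 1 * cconj (monomial f 1)) :=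
          map_X_pow_mul_mul_cconj_le hL hArch hR a b (by rw [totalDegree_monomial_one]; omega)
      _ ≤ (R : ℂ) ^ b * ((R : ℂ) ^ degree f * L 1) := by
        gcongr
        exact ih (by omega)
      _ = (R : ℂ) ^ (b + degree f) * L 1 := by ring

lemma norm_map_monomial_le (hR : 0 ≤ R) {w : (Fin n ⊕ Fin n) →₀ ℕ} (hw : degree w ≤ 2 * t) :
    ‖L (monomial w 1)‖ ≤ R ^ (((degree w : ℕ) : ℝ) / 2) * (L 1).re := by
  have hbound : ∀ m, degree m ≤ t →
      (L (monomial m 1 * cconj (monomial m 1))).re ≤ R ^ degree m * (L 1).re := fun m hm => by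
    simpa [← Complex.ofReal_pow] using
      (Complex.le_def.mp (map_monomial_mul_cconj_le hL hArch hR m hm)).1
  have hL1 : 0 ≤ (L 1).re := by simpa using re_map_mul_cconj_nonneg hL (p := 1) (by simp)
  -- `x^(u+v) = x^u · conj (conj x^v)`: Cauchy–Schwarz for `x^u` and `conj x^v`.
  obtain ⟨u, v, rfl, hu, hv⟩ := Finsupp.exists_add_eq_degree_le w (s := t) (r := t) (by omega)
  have hcs := norm_map_mul_cconj_sq_le hL (p := monomial u 1) (q := cconj (monomial v 1))
    (by simpa [totalDegree_monomial_one]) (by simpa [totalDegree_monomial_one])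
  rw [cconj_cconj, mul_comm (cconj _), monomial_mul, one_mul] at hcs
  have hsq : ‖L (monomial (u + v) 1)‖ ^ 2 ≤ (R ^ (((degree (u + v) : ℕ) : ℝ) / 2) * (L 1).re) ^ 2 :=
    calc ‖L (monomial (u + v) 1)‖ ^ 2
        ≤ (R ^ degree u * (L 1).re) * (R ^ degree v * (L 1).re) :=
          hcs.trans (mul_le_mul (hbound u hu) (hbound v hv)
            (re_map_mul_cconj_nonneg hL (by simpa [totalDegree_monomial_one]))
            (by positivity))
      _ = (R ^ (((degree (u + v) : ℕ) : ℝ) / 2) * (L 1).re) ^ 2 := by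
        rw [mul_pow, ← Real.rpow_mul_natCast hR, Nat.cast_ofNat, div_mul_cancel₀ _ two_ne_zero,
          Real.rpow_natCast, map_add, pow_add]
        ring
  exact (pow_le_pow_iff_left₀ (norm_nonneg _) (by positivity) two_ne_zero).mp hsq

end Archimedean

theorem stmt2_general {n : ℕ} (S : Set (MvPolynomial (Fin n ⊕ Fin n) ℂ))
    (R : ℝ) (hR : 0 < R)
    (hArch : ((C (R : ℂ) : MvPolynomial (Fin n ⊕ Fin n) ℂ)
        - ∑ i : Fin n, X (Sum.inl i) * X (Sum.inr i)) ∈ QMt S 1)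
    (L : ℕ → (MvPolynomial (Fin n ⊕ Fin n) ℂ →ₗ[ℂ] ℂ))
    (hLpos : ∀ t : ℕ, ∀ q ∈ QMt S t, 0 ≤ (L t) q) :
    (∀ t : ℕ, ∀ w : (Fin n ⊕ Fin n) →₀ ℕ, (w.sum fun _ e => e) ≤ 2 * t →
        ‖(L t) (monomial w 1)‖ ≤
          R ^ (((w.sum fun _ e => e : ℕ) : ℝ) / 2) * ((L t) 1).re) ∧
    ((∃ Cbd : ℝ, ∀ t : ℕ, ((L t) 1).re ≤ Cbd) →
      ∃ (Llim : MvPolynomial (Fin n ⊕ Fin n) ℂ →ₗ[ℂ] ℂ) (φ : ℕ → ℕ),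
        StrictMono φ ∧
        ∀ p : MvPolynomial (Fin n ⊕ Fin n) ℂ,
          Filter.Tendsto (fun k => (L (φ k)) p) Filter.atTop (nhds (Llim p))) := by
  refine ⟨fun t w hw => norm_map_monomial_le (hLpos t) hArch hR.le hw, ?_⟩
  rintro ⟨Cbd, hCbd⟩
  refine exists_linearMap_subseq_tendsto (basisMonomials _ ℂ) L
    (fun w => R ^ (((degree w : ℕ) : ℝ) / 2) * Cbd) fun w => ?_
  filter_upwards [eventually_ge_atTop (degree w)] with t ht
  rw [coe_basisMonomials]
  exact (norm_map_monomial_le (hLpos t) hArch hR.le (by omega)).trans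
    (mul_le_mul_of_nonneg_left (hCbd t) (by positivity))

/-- if `R − ∑ x_i x̄_i ∈ 𝓜(S)_2` and each `L t` is nonnegative on
`𝓜(S)_{2t}`, then (1) `|L t (w)| ≤ R^{deg(w)/2} · (L t 1)` for every monomial
`w` of degree at most `2t`; and (2) if `sup_t L t (1) < ∞` then some
subsequence of `(L t)_t` converges pointwise to a linear functional `L`. -/
theorem stmt2 {n : ℕ} (S : Set (MvPolynomial (Fin n ⊕ Fin n) ℂ))
    (hS : ∀ g ∈ S, cconj g = g)
    (R : ℝ) (hR : 0 < R)
    (hArch : ((C (R : ℂ) : MvPolynomial (Fin n ⊕ Fin n) ℂ)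
        - ∑ i : Fin n, X (Sum.inl i) * X (Sum.inr i)) ∈ QMt S 1)
    (L : ℕ → (MvPolynomial (Fin n ⊕ Fin n) ℂ →ₗ[ℂ] ℂ))
    (hLpos : ∀ t : ℕ, ∀ q ∈ QMt S t, 0 ≤ (L t) q) :
    (∀ t : ℕ, ∀ w : (Fin n ⊕ Fin n) →₀ ℕ, (w.sum fun _ e => e) ≤ 2 * t →
        ‖(L t) (monomial w 1)‖ ≤
          R ^ (((w.sum fun _ e => e : ℕ) : ℝ) / 2) * ((L t) 1).re) ∧
    ((∃ Cbd : ℝ, ∀ t : ℕ, ((L t) 1).re ≤ Cbd) →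
      ∃ (Llim : MvPolynomial (Fin n ⊕ Fin n) ℂ →ₗ[ℂ] ℂ) (φ : ℕ → ℕ),
        StrictMono φ ∧
        ∀ p : MvPolynomial (Fin n ⊕ Fin n) ℂ,
          Filter.Tendsto (fun k => (L (φ k)) p) Filter.atTop (nhds (Llim p))) :=
  stmt2_general S R hR hArch L hLpos
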